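/- Let s and t be nonzero real numbers with s < t < 0. Then for all positive real numbers a ≠ b, 1 < (M_s(a,b) − G(a,b))/(M_t(a,b) − G(a,b)) < s/t. -/

import Mathlib

/-- The power mean of order `r` of `a` and `b`. -/
noncomputable def powerMean (r a b : ℝ) : ℝ := ((a ^ r + b ^ r) / 2) ^ (1 / r)

/-- The geometric mean of `a` and `b`. -/
noncomputable def geomMean (a b : ℝ) : ℝ := Real.sqrt (a * b)

/-!
With $G = \sqrt{ab}$ and $u = |\log a - \log b|/2$ one has $a^r + b^r = 2G^r\cosh(ru)$, so
$M_r = G\exp(p(r))$ with $p(r) = \log\cosh(ru)/r$. For $r < 0$, $p(r) < 0$, and $p$ is increasing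
because $\log\cosh x < x\tanh x$ for $x < 0$; this gives $M_s < M_t < G$ and the lower bound.
The upper bound says that $(M_r - G)/r$ increases on $r < 0$. It is the product of $G$, of
$(e^{p} - 1)/p$, increasing in $p$ by convexity of $\exp$, and of $p(r)/r = \log\cosh(ru)/r^2$,
which increases because $x\tanh x < 2\log\cosh x$ for $x < 0$.
-/

open Real Set

theorem strictMonoOn_of_hasDerivAt_pos {D : Set ℝ} (hD : Convex ℝ D) {f f' : ℝ → ℝ}
    (hf : ∀ x ∈ D, HasDerivAt f (f' x) x) (hf' : ∀ x ∈ interior D, 0 < f' x) :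
    StrictMonoOn f D :=
  strictMonoOn_of_hasDerivWithinAt_pos hD (fun x hx ↦ (hf x hx).continuousAt.continuousWithinAt)
    (fun x hx ↦ (hf x (interior_subset hx)).hasDerivWithinAt) hf'

theorem hasDerivAt_log_cosh (x : ℝ) :
    HasDerivAt (fun x ↦ log (cosh x)) (sinh x / cosh x) x :=
  (hasDerivAt_cosh x).log (cosh_pos x).ne'

theorem hasDerivAt_sinh_div_cosh (x : ℝ) :
    HasDerivAt (fun x ↦ sinh x / cosh x) (1 / cosh x ^ 2) x :=
  ((hasDerivAt_sinh x).div (hasDerivAt_cosh x) (cosh_pos x).ne').congr_deriv <| by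
    rw [← cosh_sq_sub_sinh_sq x]
    ring

theorem log_cosh_lt_mul_tanh {x : ℝ} (hx : x < 0) :
    log (cosh x) < x * (sinh x / cosh x) := by
  have hmono : StrictMonoOn (fun x ↦ log (cosh x) - x * (sinh x / cosh x)) (Iic 0) := by
    refine strictMonoOn_of_hasDerivAt_pos (convex_Iic 0) (f' := fun x ↦ -x / cosh x ^ 2)
      (fun x _ ↦ ?_) (fun x hx ↦ ?_)
    · refine ((hasDerivAt_log_cosh x).sub
        ((hasDerivAt_id x).mul (hasDerivAt_sinh_div_cosh x))).congr_deriv ?_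
      simp only [id_eq]
      ring
    · simp only [interior_Iic, mem_Iio] at hx
      exact div_pos (neg_pos.2 hx) (by positivity)
  have := hmono hx.le (mem_Iic.2 le_rfl) hx
  simp only [cosh_zero, log_one, sinh_zero, zero_mul, sub_zero] at this
  linarith

theorem mul_tanh_lt_two_mul_log_cosh {x : ℝ} (hx : x < 0) :
    x * (sinh x / cosh x) < 2 * log (cosh x) := by
  have hmono : StrictMonoOn (fun x ↦ x * (sinh x / cosh x) - 2 * log (cosh x)) (Iic 0) := by
    refine strictMonoOn_of_hasDerivAt_pos (convex_Iic 0)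
      (f' := fun x ↦ (2 * x - sinh (2 * x)) / (2 * cosh x ^ 2)) (fun x _ ↦ ?_) (fun x hx ↦ ?_)
    · refine (((hasDerivAt_id x).mul (hasDerivAt_sinh_div_cosh x)).sub
        ((hasDerivAt_log_cosh x).const_mul 2)).congr_deriv ?_
      have := (cosh_pos x).ne'
      simp only [id_eq, sinh_two_mul]
      field_simp
      ring
    · simp only [interior_Iic, mem_Iio] at hx
      exact div_pos (sub_pos.2 (sinh_lt_self_iff.2 (by linarith))) (by positivity)
  have := hmono hx.le (mem_Iic.2 le_rfl) hx
  simp only [cosh_zero, log_one, sinh_zero, mul_zero, zero_div, sub_zero] at this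
  linarith

theorem hasDerivAt_log_cosh_mul (c r : ℝ) :
    HasDerivAt (fun r ↦ log (cosh (r * c))) (sinh (r * c) / cosh (r * c) * c) r := by
  exact (hasDerivAt_log_cosh (r * c)).comp r (hasDerivAt_mul_const c)

theorem exp_sub_one_div_lt_exp_sub_one_div {x y : ℝ} (hx : x ≠ 0) (hy : y ≠ 0) (hxy : x < y) :
    (exp x - 1) / x < (exp y - 1) / y := by
  simpa using strictConvexOn_exp.secant_strict_mono (mem_univ 0) (mem_univ x) (mem_univ y) hx hy hxy

section

variable {c : ℝ} (hc : 0 < c)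
include hc

theorem log_cosh_mul_div_neg {r : ℝ} (hr : r < 0) : log (cosh (r * c)) / r < 0 :=
  div_neg_of_pos_of_neg (log_pos (one_lt_cosh.2 (mul_neg_of_neg_of_pos hr hc).ne)) hr

theorem strictMonoOn_log_cosh_mul_div :
    StrictMonoOn (fun r ↦ log (cosh (r * c)) / r) (Iio 0) := by
  refine strictMonoOn_of_hasDerivAt_pos (convex_Iio 0)
    (f' := fun r ↦ (r * c * (sinh (r * c) / cosh (r * c)) - log (cosh (r * c))) / r ^ 2)
    (fun r hr ↦ ?_) (fun r hr ↦ ?_)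
  · refine ((hasDerivAt_log_cosh_mul c r).div (hasDerivAt_id r) (ne_of_lt hr)).congr_deriv ?_
    simp only [id_eq]
    ring
  · rw [interior_Iio, mem_Iio] at hr
    have := hr.ne
    exact div_pos (sub_pos.2 (log_cosh_lt_mul_tanh (mul_neg_of_neg_of_pos hr hc))) (by positivity)

theorem strictMonoOn_log_cosh_mul_div_sq :
    StrictMonoOn (fun r ↦ log (cosh (r * c)) / r ^ 2) (Iio 0) := by
  refine strictMonoOn_of_hasDerivAt_pos (convex_Iio 0)
    (f' := fun r ↦ r * (r * c * (sinh (r * c) / cosh (r * c)) - 2 * log (cosh (r * c))) / r ^ 4)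
    (fun r hr ↦ ?_) (fun r hr ↦ ?_)
  · have hr0 : r ≠ 0 := ne_of_lt hr
    refine ((hasDerivAt_log_cosh_mul c r).div (hasDerivAt_pow 2 r)
      (pow_ne_zero 2 hr0)).congr_deriv ?_
    field_simp
    ring
  · rw [interior_Iio, mem_Iio] at hr
    have := hr.ne
    exact div_pos (mul_pos_of_neg_of_neg hr
      (sub_neg.2 (mul_tanh_lt_two_mul_log_cosh (mul_neg_of_neg_of_pos hr hc)))) (by positivity)

theorem strictMonoOn_exp_log_cosh_mul_div_sub_one_div :
    StrictMonoOn (fun r ↦ (exp (log (cosh (r * c)) / r) - 1) / r) (Iio 0) := by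
  intro r (hr : r < 0) s (hs : s < 0) hrs
  have hfactor : ∀ q : ℝ, q < 0 → (exp (log (cosh (q * c)) / q) - 1) / q =
      (exp (log (cosh (q * c)) / q) - 1) / (log (cosh (q * c)) / q) *
        (log (cosh (q * c)) / q ^ 2) := by
    intro q hq
    rw [sq, ← div_div, div_mul_div_cancel₀ (log_cosh_mul_div_neg hc hq).ne]
  have hpr := log_cosh_mul_div_neg hc hr
  dsimp only
  rw [hfactor r hr, hfactor s hs]
  refine mul_lt_mul'' ?_ ?_ ?_ ?_
  · exact exp_sub_one_div_lt_exp_sub_one_div hpr.ne (log_cosh_mul_div_neg hc hs).ne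
      (strictMonoOn_log_cosh_mul_div hc hr hs hrs)
  · exact strictMonoOn_log_cosh_mul_div_sq hc hr hs hrs
  · exact div_nonneg_of_nonpos (sub_nonpos.2 (exp_le_one_iff.2 hpr.le)) hpr.le
  · exact div_nonneg (log_nonneg (one_le_cosh _)) (sq_nonneg r)

end

theorem geomMean_eq_exp {a b : ℝ} (ha : 0 < a) (hb : 0 < b) :
    geomMean a b = exp ((log a + log b) / 2) := by
  have hsq : a * b = exp ((log a + log b) / 2) ^ 2 := by
    rw [sq, ← exp_add, add_halves, exp_add, exp_log ha, exp_log hb]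
  rw [geomMean, hsq, sqrt_sq (exp_pos _).le]

theorem powerMean_eq_geomMean_mul_exp {a b r : ℝ} (ha : 0 < a) (hb : 0 < b) (hr : r ≠ 0) :
    powerMean r a b = geomMean a b * exp (log (cosh (r * (|log a - log b| / 2))) / r) := by
  have hcosh : cosh (r * (|log a - log b| / 2)) = cosh (r * ((log a - log b) / 2)) := by
    rcases abs_choice (log a - log b) with h | h <;> rw [h]
    rw [← cosh_neg]
    ring_nf
  have hsum : (a ^ r + b ^ r) / 2 =
      exp (r * ((log a + log b) / 2)) * cosh (r * (|log a - log b| / 2)) := by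
    rw [hcosh, cosh_eq, rpow_def_of_pos ha, rpow_def_of_pos hb, mul_div_assoc', mul_add,
      ← exp_add, ← exp_add]
    ring_nf
  rw [powerMean, hsum, rpow_def_of_pos (by positivity), log_mul (exp_pos _).ne' (cosh_pos _).ne',
    log_exp, geomMean_eq_exp ha hb, ← exp_add]
  congr 1
  field_simp

section

variable {a b : ℝ} (ha : 0 < a) (hb : 0 < b) (hab : a ≠ b)
include ha hb hab

theorem half_abs_log_sub_log_pos : 0 < |log a - log b| / 2 :=
  half_pos (abs_pos.2 (sub_ne_zero.2 (log_injOn_pos.ne ha hb hab)))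

theorem powerMean_lt_geomMean {r : ℝ} (hr : r < 0) : powerMean r a b < geomMean a b := by
  rw [powerMean_eq_geomMean_mul_exp ha hb hr.ne]
  exact mul_lt_of_lt_one_right (sqrt_pos.2 (mul_pos ha hb))
    (exp_lt_one_iff.2 (log_cosh_mul_div_neg (half_abs_log_sub_log_pos ha hb hab) hr))

theorem strictMonoOn_powerMean : StrictMonoOn (fun r ↦ powerMean r a b) (Iio 0) := by
  intro r (hr : r < 0) s (hs : s < 0) hrs
  simp only [powerMean_eq_geomMean_mul_exp ha hb hr.ne, powerMean_eq_geomMean_mul_exp ha hb hs.ne]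
  exact mul_lt_mul_of_pos_left (exp_lt_exp.2 (strictMonoOn_log_cosh_mul_div
    (half_abs_log_sub_log_pos ha hb hab) hr hs hrs)) (sqrt_pos.2 (mul_pos ha hb))

theorem strictMonoOn_powerMean_sub_geomMean_div :
    StrictMonoOn (fun r ↦ (powerMean r a b - geomMean a b) / r) (Iio 0) := by
  intro r (hr : r < 0) s (hs : s < 0) hrs
  simp only [powerMean_eq_geomMean_mul_exp ha hb hr.ne, powerMean_eq_geomMean_mul_exp ha hb hs.ne,
    ← mul_sub_one, mul_div_assoc]
  exact mul_lt_mul_of_pos_left (strictMonoOn_exp_log_cosh_mul_div_sub_one_div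
    (half_abs_log_sub_log_pos ha hb hab) hr hs hrs) (sqrt_pos.2 (mul_pos ha hb))

end

theorem div_lt_div_of_div_lt_div_of_neg {x y s t : ℝ} (hs : s < 0) (ht : t < 0) (hy : y < 0)
    (h : x / s < y / t) : x / y < s / t := by
  have key : x / y - s / t = s * t / (y * t) * (x / s - y / t) := by
    field_simp [hs.ne, ht.ne, hy.ne]
  have : 0 < s * t / (y * t) := div_pos (mul_pos_of_neg_of_neg hs ht) (mul_pos_of_neg_of_neg hy ht)
  nlinarith

theorem ratio_bounds_p_one_neg_general (s t : ℝ)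
    (hst : s < t) (ht0 : t < 0) :
    ∀ a b : ℝ, 0 < a → 0 < b → a ≠ b →
      1 < (powerMean s a b - geomMean a b) / (powerMean t a b - geomMean a b) ∧
      (powerMean s a b - geomMean a b) / (powerMean t a b - geomMean a b) < s / t := by
  intro a b ha hb hab
  have hs0 : s < 0 := hst.trans ht0
  have hY : powerMean t a b - geomMean a b < 0 := sub_neg.2 (powerMean_lt_geomMean ha hb hab ht0)
  have hXY : powerMean s a b < powerMean t a b := strictMonoOn_powerMean ha hb hab hs0 ht0 hst
  exact ⟨(one_lt_div_of_neg hY).2 (by linarith), div_lt_div_of_div_lt_div_of_neg hs0 ht0 hY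
    (strictMonoOn_powerMean_sub_geomMean_div ha hb hab hs0 ht0 hst)⟩

/-- Corollary 3.2(a). -/
theorem ratio_bounds_p_one_neg (s t : ℝ) (hs : s ≠ 0) (ht : t ≠ 0)
    (hst : s < t) (ht0 : t < 0) :
    ∀ a b : ℝ, 0 < a → 0 < b → a ≠ b →
      1 < (powerMean s a b - geomMean a b) / (powerMean t a b - geomMean a b) ∧
      (powerMean s a b - geomMean a b) / (powerMean t a b - geomMean a b) < s / t :=
  ratio_bounds_p_one_neg_general s t hst ht0
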